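/- arXiv:2207.14082 — 5 statements merged into one kernel-verified Lean document; each statement's English description precedes it below -/
import Mathlib

section
/- Let Σ ⊂ ℝ^p be a nonempty closed box (a product of closed intervals) with Euclidean projection proj_Σ, let D ∈ ℝ^{p×p} be a diagonal matrix with strictly positive diagonal entries, H ∈ ℝ^{q×p}, w ∈ ℝ^p, λ̃ ∈ ℝ^q, and β > 0. Define F : ℝ^q → ℝ^q by F(λ) := βλ − H proj_Σ(D^{-1}(w − Hᵀλ)) − λ̃. Then F is strongly monotone with modulus β, i.e. ⟨F(λ) − F(μ), λ − μ⟩ ≥ β‖λ − μ‖² for all λ, μ ∈ ℝ^q; consequently the equation F(λ) = 0 has exactly one solution. -/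
/-!
The map `G λ = H proj_Σ(D⁻¹(w - Hᵀλ))` is monotone decreasing: writing `u, v` for the
arguments of `proj_Σ` at `λ, μ`, one has `Hᵀ(λ - μ) = -D(u - v)`, so
`⟪G λ - G μ, λ - μ⟫ = -∑ᵢ dᵢ (proj u - proj v)ᵢ (u - v)ᵢ ≤ 0`, because the projection onto a box
acts coordinatewise and each coordinate is monotone. Hence `F = β • id - G - λ̃` is
`β`-strongly monotone. `F` is also Lipschitz, so for small `γ > 0` the map `λ ↦ λ - γ F λ` is a
contraction; its fixed point is the zero of `F`, unique by strong monotonicity.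
-/

open scoped RealInnerProductSpace
open Matrix

/-- Matrix-vector multiplication regarded as a map between Euclidean spaces. -/
noncomputable def mv {q p : ℕ} (A : Matrix (Fin q) (Fin p) ℝ)
    (x : EuclideanSpace ℝ (Fin p)) : EuclideanSpace ℝ (Fin q) :=
  (WithLp.equiv 2 _).symm (A.mulVec ((WithLp.equiv 2 _) x))

section StronglyMonotone

variable {E : Type*} [NormedAddCommGroup E] [InnerProductSpace ℝ E] {F G : E → E} {β : ℝ}

theorem mul_norm_sq_le_inner_smul_sub_sub (hG : ∀ x y, ⟪G x - G y, x - y⟫ ≤ 0) (c x y : E) :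
    β * ‖x - y‖ ^ 2 ≤ ⟪(β • x - G x - c) - (β • y - G y - c), x - y⟫ := by
  have : (β • x - G x - c) - (β • y - G y - c) = β • (x - y) - (G x - G y) := by
    rw [smul_sub]; abel
  rw [this, inner_sub_left, real_inner_smul_left, real_inner_self_eq_norm_sq]
  linarith [hG x y]

theorem norm_sub_smul_sq_le {a b : E} {γ M : ℝ} (hγ : 0 ≤ γ) (hab : β * ‖a‖ ^ 2 ≤ ⟪b, a⟫)
    (hb : ‖b‖ ≤ M * ‖a‖) : ‖a - γ • b‖ ^ 2 ≤ (1 - 2 * γ * β + γ ^ 2 * M ^ 2) * ‖a‖ ^ 2 := by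
  rw [norm_sub_sq_real, real_inner_smul_right, norm_smul, Real.norm_of_nonneg hγ,
    real_inner_comm]
  have : ‖b‖ ^ 2 ≤ (M * ‖a‖) ^ 2 := pow_le_pow_left₀ (norm_nonneg _) hb 2
  nlinarith [mul_le_mul_of_nonneg_left this (sq_nonneg γ)]

theorem eq_of_strongMono_of_eq (hβ : 0 < β)
    (hmono : ∀ x y, β * ‖x - y‖ ^ 2 ≤ ⟪F x - F y, x - y⟫) {x y : E} (h : F x = F y) :
    x = y := by
  have := hmono x y
  rw [h, sub_self, inner_zero_left] at this
  have : ‖x - y‖ ^ 2 ≤ 0 := nonpos_of_mul_nonpos_right this hβ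
  simpa [sub_eq_zero] using this

theorem existsUnique_eq_zero_of_strongMono [CompleteSpace E] (hβ : 0 < β) {K : NNReal}
    (hmono : ∀ x y, β * ‖x - y‖ ^ 2 ≤ ⟪F x - F y, x - y⟫) (hF : LipschitzWith K F) :
    ∃! x, F x = 0 := by
  -- `M ≥ β` bounds the Lipschitz constant of `F`, and `γ = β / M²` turns the factor
  -- `1 - 2γβ + γ²M²` of `norm_sub_smul_sq_le` into `1 - γβ < 1`.
  set M : ℝ := K + β
  set γ := β / M ^ 2
  have hβM : β ≤ M := le_add_of_nonneg_left K.coe_nonneg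
  have hM : 0 < M := hβ.trans_le hβM
  have hγM : γ * M ^ 2 = β := by simp only [γ]; field_simp
  have hγ : 0 < γ := by positivity
  have hγβ_pos : 0 < γ * β := by positivity
  have hγβ_le : γ * β ≤ 1 := by
    rw [div_mul_eq_mul_div, div_le_one (by positivity)]
    nlinarith
  have hT : ∀ x y, ‖(x - γ • F x) - (y - γ • F y)‖ ≤ √(1 - γ * β) * ‖x - y‖ := by
    intro x y
    have hFxy : ‖F x - F y‖ ≤ M * ‖x - y‖ := by
      nlinarith [hF.norm_sub_le x y, norm_nonneg (x - y)]
    have hsq := norm_sub_smul_sq_le hγ.le (hmono x y) hFxy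
    rw [show 1 - 2 * γ * β + γ ^ 2 * M ^ 2 = 1 - γ * β by linear_combination γ * hγM] at hsq
    rw [show (x - γ • F x) - (y - γ • F y) = (x - y) - γ • (F x - F y) by rw [smul_sub]; abel,
      ← Real.sqrt_sq (norm_nonneg (x - y)), ← Real.sqrt_mul (by linarith)]
    exact Real.le_sqrt_of_sq_le hsq
  have hcontr : ContractingWith (√(1 - γ * β)).toNNReal fun x => x - γ • F x := by
    refine ⟨?_, LipschitzWith.of_dist_le_mul fun x y => ?_⟩
    · rw [Real.toNNReal_lt_one, Real.sqrt_lt' one_pos]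
      linarith
    · rw [Real.coe_toNNReal _ (Real.sqrt_nonneg _), dist_eq_norm, dist_eq_norm]
      exact hT x y
  have : Nonempty E := ⟨0⟩
  have hzero : F hcontr.fixedPoint = 0 :=
    (smul_eq_zero.mp (sub_eq_self.mp hcontr.fixedPoint_isFixedPt)).resolve_left hγ.ne'
  exact ⟨_, hzero, fun y hy => eq_of_strongMono_of_eq hβ hmono (hy.trans hzero.symm)⟩

end StronglyMonotone

section NearestPoint

variable {E : Type*} [NormedAddCommGroup E] [InnerProductSpace ℝ E] {K : Set E} {P : E → E}

theorem real_inner_sub_nearest_le_zero (hK : Convex ℝ K) (hmem : ∀ x, P x ∈ K)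
    (hnear : ∀ x, ∀ y ∈ K, dist x (P x) ≤ dist x y) (x : E) {y : E} (hy : y ∈ K) :
    ⟪x - P x, y - P x⟫ ≤ 0 := by
  refine (norm_eq_iInf_iff_real_inner_le_zero hK (hmem x)).1 (le_antisymm ?_ ?_) y hy
  · have : Nonempty K := ⟨⟨P x, hmem x⟩⟩
    exact le_ciInf fun z => by simpa only [dist_eq_norm] using hnear x z z.2
  · exact ciInf_le ⟨0, Set.forall_mem_range.2 fun _ => norm_nonneg _⟩ (⟨P x, hmem x⟩ : K)

theorem lipschitzWith_one_nearest (hK : Convex ℝ K) (hmem : ∀ x, P x ∈ K)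
    (hnear : ∀ x, ∀ y ∈ K, dist x (P x) ≤ dist x y) : LipschitzWith 1 P := by
  refine LipschitzWith.of_dist_le_mul fun x y => ?_
  have hx := real_inner_sub_nearest_le_zero hK hmem hnear x (hmem y)
  have hy := real_inner_sub_nearest_le_zero hK hmem hnear y (hmem x)
  have hfirm : ‖P x - P y‖ ^ 2 ≤ ⟪x - y, P x - P y⟫ := by
    rw [← real_inner_self_eq_norm_sq]
    have : ⟪x - P x, P y - P x⟫ + ⟪y - P y, P x - P y⟫
        = ⟪P x - P y, P x - P y⟫ - ⟪x - y, P x - P y⟫ := by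
      simp only [inner_sub_left, inner_sub_right, real_inner_comm]
      ring
    linarith
  have := real_inner_le_norm (x - y) (P x - P y)
  rw [NNReal.coe_one, one_mul, dist_eq_norm, dist_eq_norm]
  nlinarith [norm_nonneg (P x - P y), norm_nonneg (x - y)]

end NearestPoint

section Box

variable {ι : Type*} {I : ι → Set ℝ}

theorem convex_box (hI : ∀ i, (I i).OrdConnected) :
    Convex ℝ {u : EuclideanSpace ℝ ι | ∀ i, u i ∈ I i} :=
  fun _ hx _ hy _ _ ha hb hab i => (hI i).convex (hx i) (hy i) ha hb hab

variable [Fintype ι] {P : EuclideanSpace ℝ ι → EuclideanSpace ℝ ι}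

theorem mul_sub_nearest_box_apply_le_zero [DecidableEq ι] (hI : ∀ i, (I i).OrdConnected)
    (hmem : ∀ x, P x ∈ {u : EuclideanSpace ℝ ι | ∀ i, u i ∈ I i})
    (hnear : ∀ x, ∀ y ∈ {u : EuclideanSpace ℝ ι | ∀ i, u i ∈ I i}, dist x (P x) ≤ dist x y)
    (x : EuclideanSpace ℝ ι) (i : ι) {t : ℝ} (ht : t ∈ I i) :
    (x i - P x i) * (t - P x i) ≤ 0 := by
  have hy : P x + EuclideanSpace.single i (t - P x i) ∈
      {u : EuclideanSpace ℝ ι | ∀ i, u i ∈ I i} := by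
    intro j
    by_cases hji : j = i
    · subst hji; simpa using ht
    · simpa [hji] using hmem x j
  simpa [EuclideanSpace.inner_single_right, mul_comm] using
    real_inner_sub_nearest_le_zero (convex_box hI) hmem hnear x hy

theorem sq_sub_nearest_box_apply_le (hI : ∀ i, (I i).OrdConnected)
    (hmem : ∀ x, P x ∈ {u : EuclideanSpace ℝ ι | ∀ i, u i ∈ I i})
    (hnear : ∀ x, ∀ y ∈ {u : EuclideanSpace ℝ ι | ∀ i, u i ∈ I i}, dist x (P x) ≤ dist x y)
    (x y : EuclideanSpace ℝ ι) (i : ι) :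
    (P x i - P y i) ^ 2 ≤ (P x i - P y i) * (x i - y i) := by
  classical
  have hx := mul_sub_nearest_box_apply_le_zero hI hmem hnear x i (hmem y i)
  have hy := mul_sub_nearest_box_apply_le_zero hI hmem hnear y i (hmem x i)
  nlinarith

end Box

section MatrixVector

variable {p q : ℕ}

theorem mv_apply (A : Matrix (Fin q) (Fin p) ℝ) (x : EuclideanSpace ℝ (Fin p)) (i : Fin q) :
    mv A x i = ∑ j, A i j * x j := by
  simp [mv, Matrix.mulVec, dotProduct]

theorem mv_sub (A : Matrix (Fin q) (Fin p) ℝ) (x y : EuclideanSpace ℝ (Fin p)) :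
    mv A (x - y) = mv A x - mv A y :=
  map_sub (Matrix.toEuclideanLin A) x y

theorem inner_mv_left (A : Matrix (Fin q) (Fin p) ℝ) (x : EuclideanSpace ℝ (Fin p))
    (z : EuclideanSpace ℝ (Fin q)) : ⟪mv A x, z⟫ = ⟪x, mv Aᵀ z⟫ := by
  simp only [PiLp.inner_apply, RCLike.inner_apply, conj_trivial, mv_apply,
    Matrix.transpose_apply, Finset.sum_mul, Finset.mul_sum]
  rw [Finset.sum_comm]
  exact Finset.sum_congr rfl fun i _ => Finset.sum_congr rfl fun j _ => by ring

theorem lipschitzWith_mv (A : Matrix (Fin q) (Fin p) ℝ) :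
    LipschitzWith ‖(Matrix.toEuclideanLin A).toContinuousLinearMap‖₊ (mv A) :=
  (Matrix.toEuclideanLin A).toContinuousLinearMap.lipschitz

theorem mv_diagonal_inv_apply {d : Fin p → ℝ} (hd : ∀ i, d i ≠ 0)
    (x : EuclideanSpace ℝ (Fin p)) (i : Fin p) : mv (diagonal d)⁻¹ x i = (d i)⁻¹ * x i := by
  rw [inv_eq_right_inv (B := diagonal fun i => (d i)⁻¹) (by simp [hd])]
  simp [mv, mulVec_diagonal]

end MatrixVector

theorem inner_mv_nearest_box_sub_nonpos {p q : ℕ} {I : Fin p → Set ℝ}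
    (hI : ∀ i, (I i).OrdConnected) {proj : EuclideanSpace ℝ (Fin p) → EuclideanSpace ℝ (Fin p)}
    (hmem : ∀ x, proj x ∈ {u : EuclideanSpace ℝ (Fin p) | ∀ i, u i ∈ I i})
    (hnear : ∀ x, ∀ y ∈ {u : EuclideanSpace ℝ (Fin p) | ∀ i, u i ∈ I i},
      dist x (proj x) ≤ dist x y)
    {d : Fin p → ℝ} (hd : ∀ i, 0 < d i) (H : Matrix (Fin q) (Fin p) ℝ)
    (w : EuclideanSpace ℝ (Fin p)) (lam mu : EuclideanSpace ℝ (Fin q)) :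
    ⟪mv H (proj (mv (diagonal d)⁻¹ (w - mv Hᵀ lam)))
      - mv H (proj (mv (diagonal d)⁻¹ (w - mv Hᵀ mu))), lam - mu⟫ ≤ 0 := by
  set u := mv (diagonal d)⁻¹ (w - mv Hᵀ lam)
  set v := mv (diagonal d)⁻¹ (w - mv Hᵀ mu)
  have hdual : ∀ i, mv Hᵀ (lam - mu) i = -(d i * (u i - v i)) := by
    intro i
    simp only [u, v, mv_diagonal_inv_apply (fun i => (hd i).ne'), mv_sub, PiLp.sub_apply]
    field_simp [(hd i).ne']
    ring
  rw [← mv_sub, inner_mv_left, PiLp.inner_apply]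
  refine Finset.sum_nonpos fun i _ => ?_
  have := sq_sub_nearest_box_apply_le hI hmem hnear u v i
  simp only [hdual, PiLp.sub_apply, RCLike.inner_apply, conj_trivial]
  nlinarith [mul_nonneg (hd i).le (le_trans (sq_nonneg _) this)]

theorem stmt1_general {p q : ℕ}
    (I : Fin p → Set ℝ)
    (hint : ∀ i, (I i).OrdConnected)
    (proj : EuclideanSpace ℝ (Fin p) → EuclideanSpace ℝ (Fin p))
    (hmem : ∀ x, proj x ∈ {u : EuclideanSpace ℝ (Fin p) | ∀ i, u i ∈ I i})
    (hnear : ∀ x, ∀ y ∈ {u : EuclideanSpace ℝ (Fin p) | ∀ i, u i ∈ I i},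
      dist x (proj x) ≤ dist x y)
    (d : Fin p → ℝ) (hd : ∀ i, 0 < d i)
    (H : Matrix (Fin q) (Fin p) ℝ) (w : EuclideanSpace ℝ (Fin p))
    (lamTil : EuclideanSpace ℝ (Fin q)) (β : ℝ) (hβ : 0 < β)
    (F : EuclideanSpace ℝ (Fin q) → EuclideanSpace ℝ (Fin q))
    (hF : ∀ lam, F lam =
      β • lam - mv H (proj (mv (Matrix.diagonal d)⁻¹ (w - mv Hᵀ lam))) - lamTil) :
    (∀ lam mu, β * ‖lam - mu‖ ^ 2 ≤ ⟪F lam - F mu, lam - mu⟫) ∧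
      (∃! lam, F lam = 0) := by
  have hmono : ∀ lam mu, β * ‖lam - mu‖ ^ 2 ≤ ⟪F lam - F mu, lam - mu⟫ := fun lam mu => by
    simpa only [hF] using mul_norm_sq_le_inner_smul_sub_sub
      (G := fun lam => mv H (proj (mv (diagonal d)⁻¹ (w - mv Hᵀ lam))))
      (inner_mv_nearest_box_sub_nonpos hint hmem hnear hd H w) lamTil lam mu
  have hproj := lipschitzWith_one_nearest (convex_box hint) hmem hnear
  obtain ⟨K, hlip⟩ : ∃ K, LipschitzWith K F := by
    rw [funext hF]
    have hG := ((lipschitzWith_mv H).comp hproj).comp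
      ((lipschitzWith_mv (diagonal d)⁻¹).comp ((LipschitzWith.const w).sub (lipschitzWith_mv Hᵀ)))
    exact ⟨_, ((lipschitzWith_smul β).sub hG).sub (LipschitzWith.const lamTil)⟩
  exact ⟨hmono, existsUnique_eq_zero_of_strongMono hβ hmono hlip⟩

/-- With `Σ` a nonempty closed box, `proj` its Euclidean projection,
`D` diagonal with positive entries, the map
`F(λ) = βλ − H proj_Σ(D⁻¹(w − Hᵀλ)) − λ̃` is strongly monotone with modulus `β > 0`,
and hence `F(λ) = 0` has exactly one solution. -/
theorem stmt1 {p q : ℕ}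
    (I : Fin p → Set ℝ)
    (hne : ∀ i, (I i).Nonempty) (hcl : ∀ i, IsClosed (I i))
    (hint : ∀ i, (I i).OrdConnected)
    (proj : EuclideanSpace ℝ (Fin p) → EuclideanSpace ℝ (Fin p))
    (hmem : ∀ x, proj x ∈ {u : EuclideanSpace ℝ (Fin p) | ∀ i, u i ∈ I i})
    (hnear : ∀ x, ∀ y ∈ {u : EuclideanSpace ℝ (Fin p) | ∀ i, u i ∈ I i},
      dist x (proj x) ≤ dist x y)
    (d : Fin p → ℝ) (hd : ∀ i, 0 < d i)
    (H : Matrix (Fin q) (Fin p) ℝ) (w : EuclideanSpace ℝ (Fin p))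
    (lamTil : EuclideanSpace ℝ (Fin q)) (β : ℝ) (hβ : 0 < β)
    (F : EuclideanSpace ℝ (Fin q) → EuclideanSpace ℝ (Fin q))
    (hF : ∀ lam, F lam =
      β • lam - mv H (proj (mv (Matrix.diagonal d)⁻¹ (w - mv Hᵀ lam))) - lamTil) :
    (∀ lam mu, β * ‖lam - mu‖ ^ 2 ≤ ⟪F lam - F mu, lam - mu⟫) ∧
      (∃! lam, F lam = 0) :=
  stmt1_general I hint proj hmem hnear d hd H w lamTil β hβ F hF
end

section
/- Let A ∈ ℝ^{N×N} be symmetric positive definite and let R ∈ ℝ^{N×N} be such that R̄ := Rᵀ + R − RᵀAR is symmetric positive definite. Then ‖I − RA‖_A < 1 and ‖I − R̄A‖_A = ‖I − RA‖_A², where ‖B‖_A := sup_{v≠0} ‖Bv‖_A / ‖v‖_A and ‖v‖_A := √⟨Av, v⟩. -/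
/-!
Put `S = √A`. Since `‖v‖_A = ‖S v‖₂`, conjugation by `S` turns `‖B‖_A` into the Euclidean operator
norm `‖S B S⁻¹‖₂`. For `M := S (I - R A) S⁻¹ = I - S R S` one finds
`S (I - R̄ A) S⁻¹ = I - S R̄ S = Mᵀ M`, so the second claim is the C⋆-identity `‖Mᵀ M‖ = ‖M‖²`, and
positive definiteness of `I - Mᵀ M = S R̄ S` gives `‖M x‖ < ‖x‖` for `x ≠ 0`, hence `‖M‖ < 1` by
compactness of the unit sphere.
-/

open Matrix

/-- The `A`-norm `‖v‖_A = √⟨Av, v⟩` of a vector. -/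
noncomputable def anorm {ι : Type*} [Fintype ι] (A : Matrix ι ι ℝ) (v : ι → ℝ) : ℝ :=
  Real.sqrt (v ⬝ᵥ (A *ᵥ v))

/-- The `A`-operator norm `‖B‖_A = sup_{v ≠ 0} ‖Bv‖_A / ‖v‖_A` of a matrix. -/
noncomputable def aOpNorm {ι : Type*} [Fintype ι] (A B : Matrix ι ι ℝ) : ℝ :=
  sSup {t | ∃ v : ι → ℝ, v ≠ 0 ∧ t = anorm A (B *ᵥ v) / anorm A v}

open scoped Matrix.Norms.L2Operator MatrixOrder

theorem ContinuousLinearMap.opNorm_eq_sSup_norm_apply_div_norm {𝕜 E F : Type*}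
    [NontriviallyNormedField 𝕜] [NormedAddCommGroup E] [NormedSpace 𝕜 E]
    [SeminormedAddCommGroup F] [NormedSpace 𝕜 F] (T : E →L[𝕜] F) :
    ‖T‖ = sSup {t | ∃ x : E, x ≠ 0 ∧ t = ‖T x‖ / ‖x‖} := by
  have hbound : ∀ x : E, x ≠ 0 → ‖T x‖ / ‖x‖ ≤ ‖T‖ := fun x hx =>
    div_le_of_le_mul₀ (norm_nonneg x) (norm_nonneg T) (T.le_opNorm x)
  have hbdd : BddAbove {t | ∃ x : E, x ≠ 0 ∧ t = ‖T x‖ / ‖x‖} :=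
    ⟨‖T‖, by rintro t ⟨x, hx, rfl⟩; exact hbound x hx⟩
  refine le_antisymm (T.opNorm_le_bound ?_ fun x => ?_) ?_
  · exact Real.sSup_nonneg fun t ⟨x, _, ht⟩ => ht ▸ by positivity
  · rcases eq_or_ne x 0 with rfl | hx
    · simp
    · have hx' : 0 < ‖x‖ := norm_pos_iff.mpr hx
      exact (div_le_iff₀ hx').mp (le_csSup hbdd ⟨x, hx, rfl⟩)
  · exact Real.sSup_le (fun t ⟨x, hx, ht⟩ => ht ▸ hbound x hx) (norm_nonneg T)

theorem ContinuousLinearMap.opNorm_lt_one_of_norm_apply_lt {E F : Type*}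
    [NormedAddCommGroup E] [NormedSpace ℝ E] [FiniteDimensional ℝ E]
    [SeminormedAddCommGroup F] [NormedSpace ℝ F] (T : E →L[ℝ] F)
    (h : ∀ x : E, x ≠ 0 → ‖T x‖ < ‖x‖) : ‖T‖ < 1 := by
  nontriviality E
  have hcpt : IsCompact ((fun x => ‖T x‖) '' Metric.sphere 0 1) :=
    (isCompact_sphere 0 1).image (by fun_prop)
  obtain ⟨x, hx, hTx⟩ := hcpt.sSup_mem ((NormedSpace.sphere_nonempty.mpr zero_le_one).image _)
  have hx1 : ‖x‖ = 1 := mem_sphere_zero_iff_norm.mp hx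
  rw [← T.sSup_sphere_eq_norm, ← hTx]
  calc ‖T x‖ < ‖x‖ := h x (norm_ne_zero_iff.mp (hx1 ▸ one_ne_zero))
    _ = 1 := hx1

namespace Matrix

variable {ι α : Type*} [Fintype ι] [DecidableEq ι]

theorem mul_one_sub_mul_mul_self_mul_inv [CommRing α] {S : Matrix ι ι α} (hU : IsUnit S)
    (X : Matrix ι ι α) : S * (1 - X * (S * S)) * S⁻¹ = 1 - S * X * S := by
  have hinv : S * S⁻¹ = 1 := mul_nonsing_inv S ((isUnit_iff_isUnit_det S).mp hU)
  calc S * (1 - X * (S * S)) * S⁻¹ = S * S⁻¹ - S * X * S * (S * S⁻¹) := by noncomm_ring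
    _ = 1 - S * X * S := by rw [hinv, mul_one]

theorem one_sub_mul_symmetrized_mul_eq_transpose_mul_self [CommRing α] {S : Matrix ι ι α}
    (hS : S.IsSymm) (R : Matrix ι ι α) :
    1 - S * (Rᵀ + R - Rᵀ * (S * S) * R) * S = (1 - S * R * S)ᵀ * (1 - S * R * S) := by
  rw [transpose_sub, transpose_one, transpose_mul, transpose_mul, hS.eq]
  noncomm_ring

theorem l2_opNorm_lt_one_of_posDef_one_sub {M : Matrix ι ι ℝ} (h : (1 - Mᵀ * M).PosDef) :
    ‖M‖ < 1 := by
  rw [← l2_opNorm_toEuclideanCLM]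
  refine ContinuousLinearMap.opNorm_lt_one_of_norm_apply_lt _ fun x hx => ?_
  have hq := h.dotProduct_mulVec_pos (x := WithLp.ofLp x) (by simpa using hx)
  rw [star_trivial, sub_mulVec, one_mulVec, dotProduct_sub, ← mulVec_mulVec, dotProduct_mulVec,
    vecMul_transpose, sub_pos] at hq
  rw [← sq_lt_sq₀ (norm_nonneg _) (norm_nonneg _), ← real_inner_self_eq_norm_sq,
    ← real_inner_self_eq_norm_sq]
  simpa only [EuclideanSpace.inner_eq_star_dotProduct, ofLp_toEuclideanCLM, star_trivial] using hq

end Matrix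

section

variable {ι : Type*} [Fintype ι]

theorem anorm_mul_self_eq_norm_toLp {S : Matrix ι ι ℝ} (hS : S.IsSymm) (v : ι → ℝ) :
    anorm (S * S) v = ‖WithLp.toLp 2 (S *ᵥ v)‖ := by
  rw [anorm, norm_eq_sqrt_real_inner, EuclideanSpace.inner_toLp_toLp]
  nth_rewrite 1 [← hS.eq]
  rw [← mulVec_mulVec, dotProduct_mulVec, vecMul_transpose]
  simp

theorem aOpNorm_mul_self_eq_l2_opNorm [DecidableEq ι] {S : Matrix ι ι ℝ} (hS : S.IsSymm)
    (hU : IsUnit S) (B : Matrix ι ι ℝ) : aOpNorm (S * S) B = ‖S * B * S⁻¹‖ := by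
  have hdet : IsUnit S.det := (isUnit_iff_isUnit_det S).mp hU
  have hSinv (w : ι → ℝ) : S *ᵥ S⁻¹ *ᵥ w = w := by
    rw [mulVec_mulVec, mul_nonsing_inv S hdet, one_mulVec]
  have hconj (v : ι → ℝ) : (S * B * S⁻¹) *ᵥ S *ᵥ v = S *ᵥ B *ᵥ v := by
    rw [mulVec_mulVec, mul_assoc, nonsing_inv_mul S hdet, mul_one, mulVec_mulVec]
  rw [← l2_opNorm_toEuclideanCLM, ContinuousLinearMap.opNorm_eq_sSup_norm_apply_div_norm, aOpNorm]
  congr 1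
  ext t
  simp only [Set.mem_ofPred_eq, anorm_mul_self_eq_norm_toLp hS]
  constructor
  · rintro ⟨v, hv, rfl⟩
    refine ⟨WithLp.toLp 2 (S *ᵥ v), ?_, ?_⟩
    · simpa using (mulVec_injective_iff_isUnit.mpr hU).ne hv
    · rw [toEuclideanCLM_toLp, hconj]
  · rintro ⟨x, hx, rfl⟩
    refine ⟨S⁻¹ *ᵥ WithLp.ofLp x, fun h => hx ?_, ?_⟩
    · simpa [h] using (hSinv (WithLp.ofLp x)).symm
    · rw [← hconj, hSinv, ← toEuclideanCLM_toLp, WithLp.toLp_ofLp]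

end

/-- For SPD `A` and `R` with `R̄ = Rᵀ + R − RᵀAR` SPD, one has
`‖I − RA‖_A < 1` and `‖I − R̄A‖_A = ‖I − RA‖_A²`. -/
theorem stmt9 {N : ℕ} (A : Matrix (Fin N) (Fin N) ℝ) (hA : A.PosDef)
    (R : Matrix (Fin N) (Fin N) ℝ) (hR : (Rᵀ + R - Rᵀ * A * R).PosDef) :
    aOpNorm A (1 - R * A) < 1 ∧
      aOpNorm A (1 - (Rᵀ + R - Rᵀ * A * R) * A) = aOpNorm A (1 - R * A) ^ 2 := by
  obtain ⟨S, hS, rfl⟩ : ∃ S : Matrix (Fin N) (Fin N) ℝ, S.PosDef ∧ S * S = A :=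
    ⟨CFC.sqrt A, (hA.isStrictlyPositive.sqrt A).posDef, CFC.sqrt_mul_sqrt_self A⟩
  have hSymm : S.IsSymm := isHermitian_iff_isSymm.mp hS.isHermitian
  set M := 1 - S * R * S
  have hM : aOpNorm (S * S) (1 - R * (S * S)) = ‖M‖ := by
    rw [aOpNorm_mul_self_eq_l2_opNorm hSymm hS.isUnit, mul_one_sub_mul_mul_self_mul_inv hS.isUnit]
  have hMM : aOpNorm (S * S) (1 - (Rᵀ + R - Rᵀ * (S * S) * R) * (S * S)) = ‖Mᵀ * M‖ := by
    rw [aOpNorm_mul_self_eq_l2_opNorm hSymm hS.isUnit, mul_one_sub_mul_mul_self_mul_inv hS.isUnit,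
      one_sub_mul_symmetrized_mul_eq_transpose_mul_self hSymm]
  have hpos : (1 - Mᵀ * M).PosDef := by
    rw [← one_sub_mul_symmetrized_mul_eq_transpose_mul_self hSymm, sub_sub_cancel]
    nth_rewrite 1 [← hSymm.eq]
    exact hR.conjTranspose_mul_mul_same (mulVec_injective_iff_isUnit.mpr hS.isUnit)
  refine ⟨hM ▸ l2_opNorm_lt_one_of_posDef_one_sub hpos, ?_⟩
  rw [hMM, hM, ← conjTranspose_eq_transpose_of_trivial, l2_opNorm_conjTranspose_mul_self, sq]
end

section
/- (Lemma 6.1.) Let A ∈ ℝ^{N×N} be symmetric positive definite, ξ = 𝟙_N the all-ones vector, η = ξᵀAξ, and let R₁ ∈ ℝ^{N×N} be such that R̄ := R₁ᵀ + R₁ − R₁ᵀAR₁ is symmetric positive definite. Set R̂₁ := η^{-1}ξξᵀ + R₁(I − η^{-1}Aξξᵀ). Let P ∈ ℝ^{N×N_c} have full column rank, A₂ := PᵀAP, let B₂ ∈ ℝ^{N_c×N_c}, and define B̄ by I − B̄A = (I − R̂₁ᵀA)(I − P B₂ᵀ Pᵀ A)(I − P B₂ Pᵀ A)(I − R̂₁A),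 and, for an integer θ ≥ 1, define B₁ by I − B₁A = (I − R̂₁ᵀA)^{θ−1}(I − B̄A)(I − R̂₁A)^{θ−1}. Then ‖I − R̂₁A‖_A < 1, ‖I − R̂₁ᵀA‖_A < 1, and ‖I − B₁A‖_A ≤ ‖I − B̄A‖_A. -/
/-!
Write `I - R̂₁A = (I - R₁A)(I - η⁻¹ξξᵀA)`. The second factor is the `A`-orthogonal projection
onto the `A`-complement of `ξ`, so it does not increase the `A`-norm, and
`‖(I - R₁A)w‖_A² = ‖w‖_A² - ⟨R̄Aw, Aw⟩`, where `⟨R̄Aw, Aw⟩ ≥ c‖w‖_A²` for some `c > 0` by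
compactness of the unit sphere. Hence `‖I - R̂₁A‖_A < 1`. The matrix `I - R̂₁ᵀA` is the
`A`-adjoint of `I - R̂₁A` and has the same `A`-norm, and the bound for `I - B₁A` follows from
submultiplicativity of `‖·‖_A`.
-/

open Matrix

namespace Matrix

variable {ι : Type*} [Fintype ι]

theorem PosSemidef.dotProduct_mulVec_sq_le {A : Matrix ι ι ℝ} (hA : A.PosSemidef)
    (u v : ι → ℝ) : (u ⬝ᵥ A *ᵥ v) ^ 2 ≤ (u ⬝ᵥ A *ᵥ u) * (v ⬝ᵥ A *ᵥ v) := by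
  let := A.toSeminormedAddCommGroup hA
  let := A.toInnerProductSpace hA
  have h : ∀ x y : ι → ℝ, x ⬝ᵥ A *ᵥ y = inner ℝ x y := fun x y => dotProduct_comm _ _
  simpa only [h, sq] using real_inner_mul_inner_self_le u v

theorem dotProduct_mulVec_mulVec (A M : Matrix ι ι ℝ) (v : ι → ℝ) :
    (M *ᵥ v) ⬝ᵥ A *ᵥ (M *ᵥ v) = v ⬝ᵥ (Mᵀ * A * M) *ᵥ v := by
  rw [Matrix.mul_assoc, ← mulVec_mulVec, dotProduct_mulVec v, vecMul_transpose, ← mulVec_mulVec]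

theorem dotProduct_mulVec_smul_smul (T : Matrix ι ι ℝ) (c : ℝ) (v : ι → ℝ) :
    (c • v) ⬝ᵥ T *ᵥ (c • v) = c ^ 2 * (v ⬝ᵥ T *ᵥ v) := by
  rw [mulVec_smul, dotProduct_smul, smul_dotProduct, smul_eq_mul, smul_eq_mul]; ring

theorem PosDef.exists_dotProduct_mulVec_le_mul {S : Matrix ι ι ℝ} (hS : S.PosDef)
    (T : Matrix ι ι ℝ) : ∃ C, 0 < C ∧ ∀ v, v ⬝ᵥ T *ᵥ v ≤ C * (v ⬝ᵥ S *ᵥ v) := by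
  have hq : ∀ M : Matrix ι ι ℝ, Continuous fun v : ι → ℝ => v ⬝ᵥ M *ᵥ v := fun M =>
    continuous_id.dotProduct (continuous_const.matrix_mulVec continuous_id)
  obtain ⟨C, hC⟩ : BddAbove ((fun u => (u ⬝ᵥ T *ᵥ u) / (u ⬝ᵥ S *ᵥ u)) '' Metric.sphere 0 1) :=
    (isCompact_sphere 0 1).bddAbove_image <| (hq T).continuousOn.div (hq S).continuousOn
      fun u hu => by
        simpa using (hS.dotProduct_mulVec_pos (ne_zero_of_mem_unit_sphere ⟨u, hu⟩)).ne'
  refine ⟨max C 1, one_pos.trans_le (le_max_right _ _), fun v => ?_⟩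
  rcases eq_or_ne v 0 with rfl | hv
  · simp
  have hSv : 0 < v ⬝ᵥ S *ᵥ v := by simpa using hS.dotProduct_mulVec_pos hv
  have hu : ‖v‖⁻¹ • v ∈ Metric.sphere (0 : ι → ℝ) 1 := by
    simp [norm_smul, inv_mul_cancel₀ (norm_ne_zero_iff.mpr hv)]
  have hratio := hC ⟨_, hu, rfl⟩
  simp only [dotProduct_mulVec_smul_smul] at hratio
  rw [mul_div_mul_left _ _ (by simpa using hv), div_le_iff₀ hSv] at hratio
  exact hratio.trans (mul_le_mul_of_nonneg_right (le_max_left _ _) hSv.le)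

end Matrix

section AOpNorm

variable {ι : Type*} [Fintype ι]

theorem anorm_sq {A : Matrix ι ι ℝ} (hA : A.PosSemidef) (v : ι → ℝ) :
    anorm A v ^ 2 = v ⬝ᵥ A *ᵥ v :=
  Real.sq_sqrt (by simpa using hA.dotProduct_mulVec_nonneg v)

theorem anorm_pos {A : Matrix ι ι ℝ} (hA : A.PosDef) {v : ι → ℝ} (hv : v ≠ 0) :
    0 < anorm A v :=
  Real.sqrt_pos.mpr (by simpa using hA.dotProduct_mulVec_pos hv)

theorem dotProduct_mulVec_le_anorm_mul_anorm {A : Matrix ι ι ℝ} (hA : A.PosSemidef)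
    (u v : ι → ℝ) : u ⬝ᵥ A *ᵥ v ≤ anorm A u * anorm A v := by
  refine abs_le_of_sq_le_sq' ?_ (by unfold anorm; positivity) |>.2
  rw [mul_pow, anorm_sq hA, anorm_sq hA]
  exact hA.dotProduct_mulVec_sq_le u v

theorem aOpNorm_nonneg (A M : Matrix ι ι ℝ) : 0 ≤ aOpNorm A M :=
  Real.sSup_nonneg fun _ ⟨_, _, ht⟩ => ht ▸ div_nonneg (Real.sqrt_nonneg _) (Real.sqrt_nonneg _)

theorem aOpNorm_le_bound (A M : Matrix ι ι ℝ) {c : ℝ} (hc : 0 ≤ c)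
    (h : ∀ v, anorm A (M *ᵥ v) ≤ c * anorm A v) : aOpNorm A M ≤ c :=
  Real.sSup_le (fun _ ⟨v, _, ht⟩ => ht ▸ div_le_of_le_mul₀ (Real.sqrt_nonneg _) hc (h v)) hc

theorem anorm_mulVec_le_aOpNorm_mul {A : Matrix ι ι ℝ} (hA : A.PosDef) (M : Matrix ι ι ℝ)
    (v : ι → ℝ) : anorm A (M *ᵥ v) ≤ aOpNorm A M * anorm A v := by
  rcases eq_or_ne v 0 with rfl | hv
  · simp [anorm]
  obtain ⟨C, -, hC⟩ := hA.exists_dotProduct_mulVec_le_mul (Mᵀ * A * M)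
  have hbdd : BddAbove {t | ∃ v : ι → ℝ, v ≠ 0 ∧ t = anorm A (M *ᵥ v) / anorm A v} := by
    refine ⟨Real.sqrt C, fun _ ⟨w, _, ht⟩ => ht ▸ div_le_of_le_mul₀ (Real.sqrt_nonneg _)
      (Real.sqrt_nonneg _) ?_⟩
    rw [anorm, anorm, ← Real.sqrt_mul' _ (by simpa using hA.posSemidef.dotProduct_mulVec_nonneg w),
      dotProduct_mulVec_mulVec]
    exact Real.sqrt_le_sqrt (hC w)
  rw [← div_le_iff₀ (anorm_pos hA hv)]
  exact le_csSup hbdd ⟨v, hv, rfl⟩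

theorem aOpNorm_mul_le {A : Matrix ι ι ℝ} (hA : A.PosDef) (M M' : Matrix ι ι ℝ) :
    aOpNorm A (M * M') ≤ aOpNorm A M * aOpNorm A M' := by
  refine aOpNorm_le_bound A _ (mul_nonneg (aOpNorm_nonneg A M) (aOpNorm_nonneg A M')) fun v => ?_
  rw [← mulVec_mulVec, mul_assoc]
  exact (anorm_mulVec_le_aOpNorm_mul hA M _).trans
    (mul_le_mul_of_nonneg_left (anorm_mulVec_le_aOpNorm_mul hA M' v) (aOpNorm_nonneg A M))

theorem aOpNorm_pow_le [DecidableEq ι] {A : Matrix ι ι ℝ} (hA : A.PosDef) (M : Matrix ι ι ℝ) :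
    ∀ k : ℕ, aOpNorm A (M ^ k) ≤ aOpNorm A M ^ k
  | 0 => aOpNorm_le_bound A 1 zero_le_one fun v => by simp
  | k + 1 => by
    rw [pow_succ, pow_succ]
    exact (aOpNorm_mul_le hA _ _).trans
      (mul_le_mul_of_nonneg_right (aOpNorm_pow_le hA M k) (aOpNorm_nonneg A M))

theorem aOpNorm_pow_le_one [DecidableEq ι] {A M : Matrix ι ι ℝ} (hA : A.PosDef)
    (hM : aOpNorm A M ≤ 1) (k : ℕ) : aOpNorm A (M ^ k) ≤ 1 :=
  (aOpNorm_pow_le hA M k).trans (pow_le_one₀ (aOpNorm_nonneg A M) hM)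

theorem aOpNorm_mul_mul_le_of_le_one {A F E : Matrix ι ι ℝ} (hA : A.PosDef)
    (hF : aOpNorm A F ≤ 1) (hE : aOpNorm A E ≤ 1) (M : Matrix ι ι ℝ) :
    aOpNorm A (F * M * E) ≤ aOpNorm A M :=
  calc aOpNorm A (F * M * E) ≤ aOpNorm A F * aOpNorm A M * aOpNorm A E :=
        (aOpNorm_mul_le hA _ _).trans
          (mul_le_mul_of_nonneg_right (aOpNorm_mul_le hA _ _) (aOpNorm_nonneg A E))
    _ ≤ aOpNorm A F * aOpNorm A M :=
        mul_le_of_le_one_right (mul_nonneg (aOpNorm_nonneg A F) (aOpNorm_nonneg A M)) hE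
    _ ≤ aOpNorm A M := mul_le_of_le_one_left (aOpNorm_nonneg A M) hF

theorem aOpNorm_le_sqrt_of_dotProduct_mulVec_le {A M : Matrix ι ι ℝ} (hA : A.PosSemidef) {γ : ℝ}
    (h : ∀ v, (M *ᵥ v) ⬝ᵥ A *ᵥ (M *ᵥ v) ≤ γ * (v ⬝ᵥ A *ᵥ v)) : aOpNorm A M ≤ Real.sqrt γ :=
  aOpNorm_le_bound A M (Real.sqrt_nonneg γ) fun v => by
    rw [anorm, anorm, ← Real.sqrt_mul' _ (by simpa using hA.dotProduct_mulVec_nonneg v)]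
    exact Real.sqrt_le_sqrt (h v)

/-- If `F` is the `A`-adjoint of `E`, then `‖F v‖_A² = ⟨E F v, v⟩_A ≤ ‖E‖_A ‖F v‖_A ‖v‖_A`. -/
theorem aOpNorm_le_of_mul_eq_transpose_mul {A E F : Matrix ι ι ℝ} (hA : A.PosDef)
    (hEF : A * F = Eᵀ * A) : aOpNorm A F ≤ aOpNorm A E := by
  refine aOpNorm_le_bound A F (aOpNorm_nonneg A E) fun v => ?_
  have hadj : (F *ᵥ v) ⬝ᵥ A *ᵥ (F *ᵥ v) = (E *ᵥ (F *ᵥ v)) ⬝ᵥ A *ᵥ v := by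
    rw [mulVec_mulVec, hEF, ← mulVec_mulVec, dotProduct_mulVec, vecMul_transpose]
  have hsq : anorm A (F *ᵥ v) ^ 2 ≤ aOpNorm A E * anorm A v * anorm A (F *ᵥ v) := by
    rw [anorm_sq hA.posSemidef, hadj]
    calc _ ≤ anorm A (E *ᵥ (F *ᵥ v)) * anorm A v :=
          dotProduct_mulVec_le_anorm_mul_anorm hA.posSemidef _ _
      _ ≤ aOpNorm A E * anorm A (F *ᵥ v) * anorm A v := by
          gcongr
          exacts [Real.sqrt_nonneg _, anorm_mulVec_le_aOpNorm_mul hA E _]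
      _ = _ := by ring
  have : 0 ≤ anorm A (F *ᵥ v) := Real.sqrt_nonneg _
  have : 0 ≤ aOpNorm A E * anorm A v := mul_nonneg (aOpNorm_nonneg A E) (Real.sqrt_nonneg _)
  nlinarith

theorem aOpNorm_one_sub_transpose_mul [DecidableEq ι] {A : Matrix ι ι ℝ} (hA : A.PosDef)
    (M : Matrix ι ι ℝ) : aOpNorm A (1 - Mᵀ * A) = aOpNorm A (1 - M * A) := by
  have hAt : Aᵀ = A := hA.isHermitian
  have key : ∀ M : Matrix ι ι ℝ, A * (1 - Mᵀ * A) = (1 - M * A)ᵀ * A := fun M => by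
    simp only [transpose_sub, transpose_one, transpose_mul, hAt, Matrix.mul_sub,
      Matrix.sub_mul, Matrix.mul_one, Matrix.one_mul, Matrix.mul_assoc]
  refine le_antisymm (aOpNorm_le_of_mul_eq_transpose_mul hA (key M)) ?_
  simpa using aOpNorm_le_of_mul_eq_transpose_mul hA (key Mᵀ)

end AOpNorm

section Smoother

variable {ι : Type*} [Fintype ι] [DecidableEq ι]

/-- The matrix is the `A`-orthogonal projection onto the `A`-complement of `ξ`; when
`ξᵀAξ = 0` it is `1`, since `0⁻¹ = 0`. -/
theorem aOpNorm_one_sub_smul_vecMulVec_mul_le_one {A : Matrix ι ι ℝ} (hA : A.PosSemidef)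
    (ξ : ι → ℝ) : aOpNorm A (1 - (ξ ⬝ᵥ A *ᵥ ξ)⁻¹ • (vecMulVec ξ ξ * A)) ≤ 1 := by
  refine (aOpNorm_le_sqrt_of_dotProduct_mulVec_le hA (γ := 1) fun v => ?_).trans_eq Real.sqrt_one
  have hsymm : v ⬝ᵥ A *ᵥ ξ = ξ ⬝ᵥ A *ᵥ v := by
    have hAt : Aᵀ = A := hA.isHermitian
    rw [dotProduct_mulVec ξ, ← mulVec_transpose, hAt, dotProduct_comm]
  set η := ξ ⬝ᵥ A *ᵥ ξ
  set s := ξ ⬝ᵥ A *ᵥ v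
  have hproj : (1 - η⁻¹ • (vecMulVec ξ ξ * A)) *ᵥ v = v - (η⁻¹ * s) • ξ := by
    rw [sub_mulVec, one_mulVec, smul_mulVec, ← mulVec_mulVec, vecMulVec_mulVec, op_smul_eq_smul,
      smul_smul]
  have hη : η⁻¹ * η⁻¹ * η = η⁻¹ := by
    rcases eq_or_ne η 0 with h | h
    · simp [h]
    · field_simp
  rw [hproj]
  simp only [mulVec_sub, mulVec_smul, dotProduct_sub, sub_dotProduct, dotProduct_smul,
    smul_dotProduct, smul_eq_mul, hsymm]
  nlinarith [sq_nonneg s, inv_nonneg.mpr (show 0 ≤ η by simpa using hA.dotProduct_mulVec_nonneg ξ)]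

noncomputable def modifiedSmoother (A R : Matrix ι ι ℝ) (ξ : ι → ℝ) : Matrix ι ι ℝ :=
  (ξ ⬝ᵥ A *ᵥ ξ)⁻¹ • vecMulVec ξ ξ + R * (1 - (ξ ⬝ᵥ A *ᵥ ξ)⁻¹ • (A * vecMulVec ξ ξ))

theorem one_sub_modifiedSmoother_mul (A R : Matrix ι ι ℝ) (ξ : ι → ℝ) :
    1 - modifiedSmoother A R ξ * A
      = (1 - R * A) * (1 - (ξ ⬝ᵥ A *ᵥ ξ)⁻¹ • (vecMulVec ξ ξ * A)) := by
  simp only [modifiedSmoother, Matrix.add_mul, Matrix.sub_mul, Matrix.mul_sub, Matrix.mul_one,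
    Matrix.one_mul, smul_mul_assoc, mul_smul_comm, smul_sub, Matrix.mul_assoc]
  abel

theorem transpose_one_sub_mul_mul_one_sub_mul {A : Matrix ι ι ℝ} (hA : Aᵀ = A)
    (R : Matrix ι ι ℝ) :
    (1 - R * A)ᵀ * A * (1 - R * A) = A - Aᵀ * (Rᵀ + R - Rᵀ * A * R) * A := by
  rw [transpose_sub, transpose_one, transpose_mul, hA]
  simp only [Matrix.sub_mul, Matrix.mul_sub, Matrix.add_mul, Matrix.mul_add, Matrix.one_mul,
    Matrix.mul_one, Matrix.mul_assoc]
  abel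

theorem aOpNorm_one_sub_mul_lt_one {A R : Matrix ι ι ℝ} (hA : A.PosDef)
    (hR : (Rᵀ + R - Rᵀ * A * R).PosDef) : aOpNorm A (1 - R * A) < 1 := by
  have hAt : Aᵀ = A := hA.isHermitian
  have hARA : (Aᵀ * (Rᵀ + R - Rᵀ * A * R) * A).PosDef := by
    simpa using hR.conjTranspose_mul_mul_same (mulVec_injective_iff_isUnit.mpr hA.isUnit)
  obtain ⟨C, hC, hAC⟩ := hARA.exists_dotProduct_mulVec_le_mul A
  refine (aOpNorm_le_sqrt_of_dotProduct_mulVec_le hA.posSemidef (γ := 1 - C⁻¹) fun w => ?_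
    ).trans_lt ((Real.sqrt_lt' one_pos).mpr ?_)
  · rw [dotProduct_mulVec_mulVec, transpose_one_sub_mul_mul_one_sub_mul hAt, sub_mulVec,
      dotProduct_sub, sub_mul, one_mul, sub_le_sub_iff_left, inv_mul_le_iff₀ hC]
    exact hAC w
  · rw [one_pow]; exact sub_lt_self 1 (inv_pos.mpr hC)

theorem aOpNorm_one_sub_modifiedSmoother_mul_lt_one {A R : Matrix ι ι ℝ} (hA : A.PosDef)
    (hR : (Rᵀ + R - Rᵀ * A * R).PosDef) (ξ : ι → ℝ) :
    aOpNorm A (1 - modifiedSmoother A R ξ * A) < 1 := by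
  rw [one_sub_modifiedSmoother_mul]
  calc _ ≤ aOpNorm A (1 - R * A) * aOpNorm A (1 - (ξ ⬝ᵥ A *ᵥ ξ)⁻¹ • (vecMulVec ξ ξ * A)) :=
        aOpNorm_mul_le hA _ _
    _ ≤ aOpNorm A (1 - R * A) :=
        mul_le_of_le_one_right (aOpNorm_nonneg _ _)
          (aOpNorm_one_sub_smul_vecMulVec_mul_le_one hA.posSemidef ξ)
    _ < 1 := aOpNorm_one_sub_mul_lt_one hA hR

end Smoother

theorem stmt10_general {N Nc : ℕ} (A : Matrix (Fin N) (Fin N) ℝ) (hA : A.PosDef)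
    (R₁ : Matrix (Fin N) (Fin N) ℝ) (hR : (R₁ᵀ + R₁ - R₁ᵀ * A * R₁).PosDef)
    (P : Matrix (Fin N) (Fin Nc) ℝ)
    (B₂ : Matrix (Fin Nc) (Fin Nc) ℝ) (Bbar B₁ : Matrix (Fin N) (Fin N) ℝ)
    (θ : ℕ) :
    let ξ : Fin N → ℝ := fun _ => 1
    let η := ξ ⬝ᵥ (A *ᵥ ξ)
    let Rhat := η⁻¹ • vecMulVec ξ ξ + R₁ * (1 - η⁻¹ • (A * vecMulVec ξ ξ))
    1 - Bbar * A =
        (1 - Rhatᵀ * A) * (1 - P * B₂ᵀ * Pᵀ * A) * (1 - P * B₂ * Pᵀ * A) * (1 - Rhat * A) →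
      1 - B₁ * A = (1 - Rhatᵀ * A) ^ (θ - 1) * (1 - Bbar * A) * (1 - Rhat * A) ^ (θ - 1) →
      aOpNorm A (1 - Rhat * A) < 1 ∧ aOpNorm A (1 - Rhatᵀ * A) < 1 ∧
        aOpNorm A (1 - B₁ * A) ≤ aOpNorm A (1 - Bbar * A) := by
  intro ξ η Rhat _ hB₁
  have hE : aOpNorm A (1 - Rhat * A) < 1 := aOpNorm_one_sub_modifiedSmoother_mul_lt_one hA hR ξ
  have hF : aOpNorm A (1 - Rhatᵀ * A) < 1 := by
    rwa [aOpNorm_one_sub_transpose_mul hA]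
  rw [hB₁]
  exact ⟨hE, hF, aOpNorm_mul_mul_le_of_le_one hA (aOpNorm_pow_le_one hA hF.le _)
    (aOpNorm_pow_le_one hA hE.le _) _⟩

/-- Lemma 6.1. With `ξ = 𝟙_N`, `η = ξᵀAξ`, `R̄ = R₁ᵀ+R₁−R₁ᵀAR₁` SPD,
`R̂₁ = η⁻¹ξξᵀ + R₁(I − η⁻¹Aξξᵀ)`, `P` of full column rank, `B̄` defined by
`I − B̄A = (I − R̂₁ᵀA)(I − PB₂ᵀPᵀA)(I − PB₂PᵀA)(I − R̂₁A)` and, for `θ ≥ 1`, `B₁` defined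
by `I − B₁A = (I − R̂₁ᵀA)^{θ−1}(I − B̄A)(I − R̂₁A)^{θ−1}`, one has
`‖I − R̂₁A‖_A < 1`, `‖I − R̂₁ᵀA‖_A < 1` and `‖I − B₁A‖_A ≤ ‖I − B̄A‖_A`. -/
theorem stmt10 {N Nc : ℕ} (A : Matrix (Fin N) (Fin N) ℝ) (hA : A.PosDef)
    (R₁ : Matrix (Fin N) (Fin N) ℝ) (hR : (R₁ᵀ + R₁ - R₁ᵀ * A * R₁).PosDef)
    (P : Matrix (Fin N) (Fin Nc) ℝ) (hP : Function.Injective fun x : Fin Nc → ℝ => P *ᵥ x)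
    (B₂ : Matrix (Fin Nc) (Fin Nc) ℝ) (Bbar B₁ : Matrix (Fin N) (Fin N) ℝ)
    (θ : ℕ) (hθ : 1 ≤ θ) :
    let ξ : Fin N → ℝ := fun _ => 1
    let η := ξ ⬝ᵥ (A *ᵥ ξ)
    let Rhat := η⁻¹ • vecMulVec ξ ξ + R₁ * (1 - η⁻¹ • (A * vecMulVec ξ ξ))
    1 - Bbar * A =
        (1 - Rhatᵀ * A) * (1 - P * B₂ᵀ * Pᵀ * A) * (1 - P * B₂ * Pᵀ * A) * (1 - Rhat * A) →
      1 - B₁ * A = (1 - Rhatᵀ * A) ^ (θ - 1) * (1 - Bbar * A) * (1 - Rhat * A) ^ (θ - 1) →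
      aOpNorm A (1 - Rhat * A) < 1 ∧ aOpNorm A (1 - Rhatᵀ * A) < 1 ∧
        aOpNorm A (1 - B₁ * A) ≤ aOpNorm A (1 - Bbar * A) :=
  stmt10_general A hA R₁ hR P B₂ Bbar B₁ θ
end

section
/- (Lemma 6.3.) Under the two-level setting — A ∈ ℝ^{N×N} symmetric positive definite, ξ = 𝟙_N, η = ξᵀAξ, R₁ with R̄ := R₁ᵀ + R₁ − R₁ᵀAR₁ symmetric positive definite, P ∈ ℝ^{N×N_c} of full column rank, A₂ := PᵀAP, B₂ with B̄₂ := B₂ᵀ + B₂ − B₂ᵀA₂B₂ symmetric positive definite, and c₀ = sup over ‖v‖_A = 1 of the infimum over decompositions x₁ξ + x₂ + Px₃ = v of η(x₁ + η^{-1}ξᵀA(x₂+Px₃))² + ‖x₂ + R₁ᵀAPx₃‖²_{R̄^{-1}} + ‖x₃‖²_{B̄₂^{-1}} — one has c₀ ≤ 1 + χ₁, where V_r := { v ∈ ℝ^N : ⟨Av, ξ⟩ = 0 } and χ₁ := sup over v_r ∈ V_r with ‖v_r‖_A = 1 of the infimum, over all (x₂, x₃) ∈ ℝ^N × ℝ^{N_c}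 with x₂ + Px₃ = v_r, of ‖x₂ + R₁ᵀAPx₃‖²_{R̄^{-1}} + ‖x₃‖²_{B̄₂^{-1}}. -/
/-!
Write a vector `v` with `‖v‖_A = 1` as `v = α ξ + w`, where `w ∈ V_r` is its `A`-orthogonal
projection, so that `η α² + ‖w‖²_A = 1`. Choosing `x₁ = α` kills the coupling term
`η⁻¹ ξᵀA(x₂ + P x₃)` for every decomposition `x₂ + P x₃ = w`, so the infimum defining `c₀` at `v`
is at most `η α²` plus the infimum in the definition of `χ₁` at `w`. The latter is homogeneous of
degree two in `w`, hence at most `‖w‖²_A χ₁`, and `η α² + ‖w‖²_A χ₁ ≤ 1 + χ₁`.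

The supremum `χ₁` must be finite, as `sSup` of an unbounded set of reals is `0`; this follows
from comparing `v ↦ vᵀ R̄⁻¹ v` with `‖v‖²_A` on the unit sphere.
-/

open Matrix

variable {ι κ : Type*}

theorem exists_le_mul_of_isHomogeneous_two {E : Type*} [NormedAddCommGroup E] [NormedSpace ℝ E]
    [ProperSpace E] {f g : E → ℝ} (hf : Continuous f) (hg : Continuous g)
    (hf_smul : ∀ (t : ℝ) x, f (t • x) = t ^ 2 * f x)
    (hg_smul : ∀ (t : ℝ) x, g (t • x) = t ^ 2 * g x)
    (hg_pos : ∀ x ≠ 0, 0 < g x) : ∃ c, ∀ x, f x ≤ c * g x := by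
  have hg_ne : ∀ x ∈ Metric.sphere (0 : E) 1, g x ≠ 0 := fun x hx =>
    (hg_pos x (ne_zero_of_mem_unit_sphere ⟨x, hx⟩)).ne'
  obtain ⟨c, hc⟩ := (isCompact_sphere (0 : E) 1).bddAbove_image
    (hf.continuousOn.div hg.continuousOn hg_ne)
  refine ⟨c, fun x => ?_⟩
  rcases eq_or_ne x 0 with rfl | hx
  · have hf0 : f 0 = 0 := by simpa using hf_smul 0 0
    have hg0 : g 0 = 0 := by simpa using hg_smul 0 0
    simp [hf0, hg0]
  have hnorm : 0 < ‖x‖ := norm_pos_iff.2 hx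
  set u := ‖x‖⁻¹ • x
  have hu : u ∈ Metric.sphere (0 : E) 1 := by simp [u, norm_smul, hnorm.ne']
  have hfu : f u ≤ c * g u :=
    (div_le_iff₀ (hg_pos u (ne_zero_of_mem_unit_sphere ⟨u, hu⟩))).1 (hc ⟨u, hu, rfl⟩)
  have hxu : x = ‖x‖ • u := by simp [u, smul_smul, hnorm.ne']
  rw [hxu, hf_smul, hg_smul]
  nlinarith [sq_nonneg ‖x‖]

theorem Matrix.IsHermitian.dotProduct_mulVec_comm [Fintype ι] {A : Matrix ι ι ℝ}
    (hA : A.IsHermitian) (x y : ι → ℝ) : x ⬝ᵥ (A *ᵥ y) = y ⬝ᵥ (A *ᵥ x) := by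
  rw [dotProduct_mulVec, ← mulVec_transpose, dotProduct_comm,
    ← conjTranspose_eq_transpose_of_trivial, hA.eq]

theorem Matrix.dotProduct_mulVec_smul_self [Fintype ι] (M : Matrix ι ι ℝ) (t : ℝ) (x : ι → ℝ) :
    (t • x) ⬝ᵥ (M *ᵥ (t • x)) = t ^ 2 * (x ⬝ᵥ (M *ᵥ x)) := by
  rw [mulVec_smul, smul_dotProduct, dotProduct_smul, smul_eq_mul, smul_eq_mul]; ring

theorem Matrix.PosSemidef.dotProduct_mulVec_self_nonneg [Fintype ι] {M : Matrix ι ι ℝ}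
    (hM : M.PosSemidef) (x : ι → ℝ) : 0 ≤ x ⬝ᵥ (M *ᵥ x) := by
  simpa using hM.dotProduct_mulVec_nonneg x

theorem anorm_eq_one_iff [Fintype ι] (A : Matrix ι ι ℝ) (v : ι → ℝ) :
    anorm A v = 1 ↔ v ⬝ᵥ (A *ᵥ v) = 1 :=
  Real.sqrt_eq_one

theorem dotProduct_mulVec_sub_proj_eq_zero [Fintype ι] (A : Matrix ι ι ℝ) {ξ : ι → ℝ}
    (hξ : ξ ⬝ᵥ (A *ᵥ ξ) ≠ 0) (v : ι → ℝ) :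
    (v - (v ⬝ᵥ (A *ᵥ ξ) / ξ ⬝ᵥ (A *ᵥ ξ)) • ξ) ⬝ᵥ (A *ᵥ ξ) = 0 := by
  rw [sub_dotProduct, smul_dotProduct, smul_eq_mul, div_mul_cancel₀ _ hξ, sub_self]

theorem Matrix.IsHermitian.dotProduct_mulVec_smul_add_self [Fintype ι] {A : Matrix ι ι ℝ}
    (hA : A.IsHermitian) {ξ w : ι → ℝ} (hw : w ⬝ᵥ (A *ᵥ ξ) = 0) (a : ℝ) :
    (a • ξ + w) ⬝ᵥ (A *ᵥ (a • ξ + w)) = (ξ ⬝ᵥ (A *ᵥ ξ)) * a ^ 2 + w ⬝ᵥ (A *ᵥ w) := by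
  have hw' : ξ ⬝ᵥ (A *ᵥ w) = 0 := by rw [hA.dotProduct_mulVec_comm, hw]
  simp only [mulVec_add, mulVec_smul, add_dotProduct, dotProduct_add, smul_dotProduct,
    dotProduct_smul, hw, hw', smul_eq_mul]
  ring

theorem le_dotProduct_mulVec_mul_sSup [Fintype ι] {A : Matrix ι ι ℝ} (hA : A.PosDef)
    {p : (ι → ℝ) → Prop} (hp : ∀ (t : ℝ) v, p v → p (t • v))
    {F : (ι → ℝ) → ℝ} (hF : ∀ (t : ℝ) v, F (t • v) ≤ t ^ 2 * F v)
    (hbdd : BddAbove {t | ∃ v, p v ∧ anorm A v = 1 ∧ t = F v}) {v : ι → ℝ} (hv : p v) :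
    F v ≤ (v ⬝ᵥ (A *ᵥ v)) * sSup {t | ∃ v, p v ∧ anorm A v = 1 ∧ t = F v} := by
  rcases eq_or_ne v 0 with rfl | hv0
  · simpa using hF 0 0
  have hpos : 0 < v ⬝ᵥ (A *ᵥ v) := by simpa using hA.dotProduct_mulVec_pos hv0
  set β := √(v ⬝ᵥ (A *ᵥ v))
  have hβ : 0 < β := Real.sqrt_pos.2 hpos
  have hβ_sq : β ^ 2 = v ⬝ᵥ (A *ᵥ v) := Real.sq_sqrt hpos.le
  have hw : anorm A (β⁻¹ • v) = 1 := by
    rw [anorm_eq_one_iff, dotProduct_mulVec_smul_self, inv_pow, hβ_sq, inv_mul_cancel₀ hpos.ne']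
  calc F v = F (β • β⁻¹ • v) := by rw [smul_smul, mul_inv_cancel₀ hβ.ne', one_smul]
    _ ≤ β ^ 2 * F (β⁻¹ • v) := hF β _
    _ ≤ β ^ 2 * sSup {t | ∃ v, p v ∧ anorm A v = 1 ∧ t = F v} :=
      mul_le_mul_of_nonneg_left (le_csSup hbdd ⟨_, hp _ v hv, hw, rfl⟩) (sq_nonneg β)
    _ = _ := by rw [hβ_sq]

noncomputable def decompInf [Fintype κ] (P : Matrix ι κ ℝ) (Q : (ι → ℝ) → (κ → ℝ) → ℝ)
    (v : ι → ℝ) : ℝ :=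
  sInf {s | ∃ x₂ x₃, x₂ + P *ᵥ x₃ = v ∧ s = Q x₂ x₃}

section decompInf

variable [Fintype κ] {P : Matrix ι κ ℝ} {Q : (ι → ℝ) → (κ → ℝ) → ℝ}

theorem decompInf_le (hQ : ∀ x₂ x₃, 0 ≤ Q x₂ x₃) {v x₂ : ι → ℝ} {x₃ : κ → ℝ}
    (h : x₂ + P *ᵥ x₃ = v) : decompInf P Q v ≤ Q x₂ x₃ :=
  csInf_le ⟨0, by rintro _ ⟨y₂, y₃, -, rfl⟩; exact hQ y₂ y₃⟩ ⟨x₂, x₃, h, rfl⟩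

theorem decompInf_nonneg (hQ : ∀ x₂ x₃, 0 ≤ Q x₂ x₃) (v : ι → ℝ) : 0 ≤ decompInf P Q v :=
  Real.sInf_nonneg <| by rintro _ ⟨x₂, x₃, -, rfl⟩; exact hQ x₂ x₃

theorem decompInf_smul_le (hQ : ∀ x₂ x₃, 0 ≤ Q x₂ x₃)
    (hQ_smul : ∀ (t : ℝ) x₂ x₃, Q (t • x₂) (t • x₃) = t ^ 2 * Q x₂ x₃) (t : ℝ) (v : ι → ℝ) :
    decompInf P Q (t • v) ≤ t ^ 2 * decompInf P Q v := by
  rw [decompInf, decompInf, ← smul_eq_mul, ← Real.sInf_smul_of_nonneg (sq_nonneg t)]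
  refine csInf_le_csInf ⟨0, ?_⟩ ⟨_, ⟨_, ⟨v, 0, by simp, rfl⟩, rfl⟩⟩ ?_
  · rintro _ ⟨x₂, x₃, -, rfl⟩; exact hQ x₂ x₃
  · rintro _ ⟨_, ⟨x₂, x₃, h, rfl⟩, rfl⟩
    exact ⟨t • x₂, t • x₃, by rw [mulVec_smul, ← smul_add, h], (hQ_smul t x₂ x₃).symm⟩

theorem sSup_decompInf_sphere_nonneg [Fintype ι] (A : Matrix ι ι ℝ) (hQ : ∀ x₂ x₃, 0 ≤ Q x₂ x₃)
    (p : (ι → ℝ) → Prop) :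
    0 ≤ sSup {t | ∃ v, p v ∧ anorm A v = 1 ∧ t = decompInf P Q v} :=
  Real.sSup_nonneg <| by rintro _ ⟨v, -, -, rfl⟩; exact decompInf_nonneg hQ v

theorem bddAbove_decompInf_sphere [Fintype ι] {A : Matrix ι ι ℝ} (hA : A.PosDef)
    (hQ : ∀ x₂ x₃, 0 ≤ Q x₂ x₃)
    (hQ_smul : ∀ (t : ℝ) x₂ x₃, Q (t • x₂) (t • x₃) = t ^ 2 * Q x₂ x₃)
    (hQ_cont : Continuous fun x => Q x 0) (p : (ι → ℝ) → Prop) :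
    BddAbove {t | ∃ v, p v ∧ anorm A v = 1 ∧ t = decompInf P Q v} := by
  obtain ⟨c, hc⟩ := exists_le_mul_of_isHomogeneous_two hQ_cont
    (g := fun x => x ⬝ᵥ (A *ᵥ x)) (by fun_prop) (fun t x => by simpa using hQ_smul t x 0)
    (dotProduct_mulVec_smul_self A) (fun x hx => by simpa using hA.dotProduct_mulVec_pos hx)
  refine ⟨c, ?_⟩
  rintro _ ⟨v, -, hv, rfl⟩
  calc decompInf P Q v ≤ Q v 0 := decompInf_le hQ (by simp)
    _ ≤ c * (v ⬝ᵥ (A *ᵥ v)) := hc v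
    _ = c := by rw [(anorm_eq_one_iff A v).1 hv, mul_one]

theorem sInf_decomp_le_add_decompInf [Fintype ι] {A : Matrix ι ι ℝ} (hA : A.PosSemidef)
    (hQ : ∀ x₂ x₃, 0 ≤ Q x₂ x₃) {ξ : ι → ℝ} {K : ℝ → (ι → ℝ) → (κ → ℝ) → ℝ}
    (hK : ∀ x₁ x₂ x₃, K x₁ x₂ x₃ = ξ ⬝ᵥ (A *ᵥ ξ) *
      (x₁ + (ξ ⬝ᵥ (A *ᵥ ξ))⁻¹ * (ξ ⬝ᵥ (A *ᵥ (x₂ + P *ᵥ x₃)))) ^ 2 + Q x₂ x₃)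
    (a : ℝ) {w : ι → ℝ} (hw : w ⬝ᵥ (A *ᵥ ξ) = 0) :
    sInf {s | ∃ x₁ x₂ x₃, x₁ • ξ + x₂ + P *ᵥ x₃ = a • ξ + w ∧ s = K x₁ x₂ x₃} ≤
      ξ ⬝ᵥ (A *ᵥ ξ) * a ^ 2 + decompInf P Q w := by
  have hbdd : BddBelow
      {s | ∃ x₁ x₂ x₃, x₁ • ξ + x₂ + P *ᵥ x₃ = a • ξ + w ∧ s = K x₁ x₂ x₃} := by
    refine ⟨0, ?_⟩
    rintro _ ⟨x₁, x₂, x₃, -, rfl⟩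
    rw [hK]
    exact add_nonneg (mul_nonneg (hA.dotProduct_mulVec_self_nonneg ξ) (sq_nonneg _)) (hQ x₂ x₃)
  have hξw : ξ ⬝ᵥ (A *ᵥ w) = 0 := by rw [hA.isHermitian.dotProduct_mulVec_comm, hw]
  suffices h : sInf {s | ∃ x₁ x₂ x₃, x₁ • ξ + x₂ + P *ᵥ x₃ = a • ξ + w ∧ s = K x₁ x₂ x₃} -
      ξ ⬝ᵥ (A *ᵥ ξ) * a ^ 2 ≤ decompInf P Q w by linarith
  refine le_csInf ⟨Q w 0, w, 0, by simp, rfl⟩ ?_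
  rintro _ ⟨x₂, x₃, h, rfl⟩
  have hmem := csInf_le hbdd ⟨a, x₂, x₃, by rw [add_assoc, h], rfl⟩
  rw [hK, h, hξw, mul_zero, add_zero] at hmem
  linarith

theorem sInf_decomp_le_one_add_sSup_decompInf [Fintype ι] {A : Matrix ι ι ℝ} (hA : A.PosDef)
    (hQ : ∀ x₂ x₃, 0 ≤ Q x₂ x₃)
    (hQ_smul : ∀ (t : ℝ) x₂ x₃, Q (t • x₂) (t • x₃) = t ^ 2 * Q x₂ x₃)
    (hQ_cont : Continuous fun x => Q x 0) {ξ : ι → ℝ} (hξ : ξ ≠ 0)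
    {K : ℝ → (ι → ℝ) → (κ → ℝ) → ℝ}
    (hK : ∀ x₁ x₂ x₃, K x₁ x₂ x₃ = ξ ⬝ᵥ (A *ᵥ ξ) *
      (x₁ + (ξ ⬝ᵥ (A *ᵥ ξ))⁻¹ * (ξ ⬝ᵥ (A *ᵥ (x₂ + P *ᵥ x₃)))) ^ 2 + Q x₂ x₃)
    {v : ι → ℝ} (hv : anorm A v = 1) :
    sInf {s | ∃ x₁ x₂ x₃, x₁ • ξ + x₂ + P *ᵥ x₃ = v ∧ s = K x₁ x₂ x₃} ≤
      1 + sSup {t | ∃ v, v ⬝ᵥ (A *ᵥ ξ) = 0 ∧ anorm A v = 1 ∧ t = decompInf P Q v} := by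
  set χ := sSup {t | ∃ v, v ⬝ᵥ (A *ᵥ ξ) = 0 ∧ anorm A v = 1 ∧ t = decompInf P Q v}
  set η := ξ ⬝ᵥ (A *ᵥ ξ)
  have hη : 0 < η := by simpa using hA.dotProduct_mulVec_pos hξ
  have hχ : 0 ≤ χ := sSup_decompInf_sphere_nonneg A hQ _
  set α := v ⬝ᵥ (A *ᵥ ξ) / η
  set w := v - α • ξ
  have hw : w ⬝ᵥ (A *ᵥ ξ) = 0 := dotProduct_mulVec_sub_proj_eq_zero A hη.ne' v
  have hv_split : v = α • ξ + w := (add_sub_cancel _ _).symm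
  have h_energy : η * α ^ 2 + w ⬝ᵥ (A *ᵥ w) = 1 := by
    rw [← (anorm_eq_one_iff A v).1 hv, hv_split,
      hA.isHermitian.dotProduct_mulVec_smul_add_self hw]
  calc sInf {s | ∃ x₁ x₂ x₃, x₁ • ξ + x₂ + P *ᵥ x₃ = v ∧ s = K x₁ x₂ x₃}
      ≤ η * α ^ 2 + decompInf P Q w := by
        rw [hv_split]
        exact sInf_decomp_le_add_decompInf hA.posSemidef hQ hK α hw
    _ ≤ η * α ^ 2 + w ⬝ᵥ (A *ᵥ w) * χ := by
        gcongr
        exact le_dotProduct_mulVec_mul_sSup hA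
          (fun t u hu => by rw [smul_dotProduct, hu, smul_zero]) (decompInf_smul_le hQ hQ_smul)
          (bddAbove_decompInf_sphere hA hQ hQ_smul hQ_cont _) hw
    _ ≤ 1 + χ := by
        have hα : 0 ≤ η * α ^ 2 := by positivity
        nlinarith [mul_nonneg hχ hα, hA.posSemidef.dotProduct_mulVec_self_nonneg w]

end decompInf

theorem stmt12_general {N Nc : ℕ} (A : Matrix (Fin N) (Fin N) ℝ) (hA : A.PosDef)
    (R₁ : Matrix (Fin N) (Fin N) ℝ) (hR : (R₁ᵀ + R₁ - R₁ᵀ * A * R₁).PosDef)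
    (P : Matrix (Fin N) (Fin Nc) ℝ)
    (B₂ : Matrix (Fin Nc) (Fin Nc) ℝ)
    (hB₂ : (B₂ᵀ + B₂ - B₂ᵀ * (Pᵀ * A * P) * B₂).PosDef) :
    let ξ : Fin N → ℝ := fun _ => 1
    let η := ξ ⬝ᵥ (A *ᵥ ξ)
    let Rbar := R₁ᵀ + R₁ - R₁ᵀ * A * R₁
    let Bbar₂ := B₂ᵀ + B₂ - B₂ᵀ * (Pᵀ * A * P) * B₂
    let K : ℝ → (Fin N → ℝ) → (Fin Nc → ℝ) → ℝ := fun x₁ x₂ x₃ =>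
      η * (x₁ + η⁻¹ * (ξ ⬝ᵥ (A *ᵥ (x₂ + P *ᵥ x₃)))) ^ 2
        + (x₂ + (R₁ᵀ * A * P) *ᵥ x₃) ⬝ᵥ (Rbar⁻¹ *ᵥ (x₂ + (R₁ᵀ * A * P) *ᵥ x₃))
        + x₃ ⬝ᵥ (Bbar₂⁻¹ *ᵥ x₃)
    let c₀ := sSup {t | ∃ v : Fin N → ℝ, anorm A v = 1 ∧
      t = sInf {s | ∃ x₁ x₂ x₃, x₁ • ξ + x₂ + P *ᵥ x₃ = v ∧ s = K x₁ x₂ x₃}}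
    let χ₁ := sSup {t | ∃ v : Fin N → ℝ, (v ⬝ᵥ (A *ᵥ ξ)) = 0 ∧ anorm A v = 1 ∧
      t = sInf {s | ∃ x₂ x₃, x₂ + P *ᵥ x₃ = v ∧
        s = (x₂ + (R₁ᵀ * A * P) *ᵥ x₃) ⬝ᵥ (Rbar⁻¹ *ᵥ (x₂ + (R₁ᵀ * A * P) *ᵥ x₃))
          + x₃ ⬝ᵥ (Bbar₂⁻¹ *ᵥ x₃)}}
    c₀ ≤ 1 + χ₁ := by
  intro ξ η Rbar Bbar₂ K c₀ χ₁
  set Q : (Fin N → ℝ) → (Fin Nc → ℝ) → ℝ := fun x₂ x₃ =>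
    (x₂ + (R₁ᵀ * A * P) *ᵥ x₃) ⬝ᵥ (Rbar⁻¹ *ᵥ (x₂ + (R₁ᵀ * A * P) *ᵥ x₃))
      + x₃ ⬝ᵥ (Bbar₂⁻¹ *ᵥ x₃)
  have hQ : ∀ x₂ x₃, 0 ≤ Q x₂ x₃ := fun x₂ x₃ =>
    add_nonneg (hR.inv.posSemidef.dotProduct_mulVec_self_nonneg _)
      (hB₂.inv.posSemidef.dotProduct_mulVec_self_nonneg _)
  have hQ_smul : ∀ (t : ℝ) x₂ x₃, Q (t • x₂) (t • x₃) = t ^ 2 * Q x₂ x₃ := fun t x₂ x₃ => by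
    simp only [Q]
    rw [mulVec_smul, ← smul_add, dotProduct_mulVec_smul_self, dotProduct_mulVec_smul_self,
      mul_add]
  refine Real.sSup_le ?_ (add_nonneg zero_le_one (sSup_decompInf_sphere_nonneg A hQ _))
  rintro _ ⟨v, hv, rfl⟩
  have hξ : ξ ≠ 0 := by
    obtain ⟨i, -⟩ := Function.ne_iff.1 (show v ≠ 0 by rintro rfl; simp [anorm] at hv)
    exact Function.ne_iff.2 ⟨i, one_ne_zero⟩
  exact sInf_decomp_le_one_add_sSup_decompInf hA hQ hQ_smul (by fun_prop) hξ
    (fun _ _ _ => add_assoc _ _ _) hv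

/-- Lemma 6.3. Under the two-level setting, `c₀ ≤ 1 + χ₁` with `χ₁`
the analogous sup–inf over the `A`-orthogonal complement `V_r` of `span{𝟙_N}`, taken
over decompositions `x₂ + Px₃ = v_r`. -/
theorem stmt12 {N Nc : ℕ} (A : Matrix (Fin N) (Fin N) ℝ) (hA : A.PosDef)
    (R₁ : Matrix (Fin N) (Fin N) ℝ) (hR : (R₁ᵀ + R₁ - R₁ᵀ * A * R₁).PosDef)
    (P : Matrix (Fin N) (Fin Nc) ℝ) (hP : Function.Injective fun x : Fin Nc → ℝ => P *ᵥ x)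
    (B₂ : Matrix (Fin Nc) (Fin Nc) ℝ)
    (hB₂ : (B₂ᵀ + B₂ - B₂ᵀ * (Pᵀ * A * P) * B₂).PosDef) :
    let ξ : Fin N → ℝ := fun _ => 1
    let η := ξ ⬝ᵥ (A *ᵥ ξ)
    let Rbar := R₁ᵀ + R₁ - R₁ᵀ * A * R₁
    let Bbar₂ := B₂ᵀ + B₂ - B₂ᵀ * (Pᵀ * A * P) * B₂
    let K : ℝ → (Fin N → ℝ) → (Fin Nc → ℝ) → ℝ := fun x₁ x₂ x₃ =>
      η * (x₁ + η⁻¹ * (ξ ⬝ᵥ (A *ᵥ (x₂ + P *ᵥ x₃)))) ^ 2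
        + (x₂ + (R₁ᵀ * A * P) *ᵥ x₃) ⬝ᵥ (Rbar⁻¹ *ᵥ (x₂ + (R₁ᵀ * A * P) *ᵥ x₃))
        + x₃ ⬝ᵥ (Bbar₂⁻¹ *ᵥ x₃)
    let c₀ := sSup {t | ∃ v : Fin N → ℝ, anorm A v = 1 ∧
      t = sInf {s | ∃ x₁ x₂ x₃, x₁ • ξ + x₂ + P *ᵥ x₃ = v ∧ s = K x₁ x₂ x₃}}
    let χ₁ := sSup {t | ∃ v : Fin N → ℝ, (v ⬝ᵥ (A *ᵥ ξ)) = 0 ∧ anorm A v = 1 ∧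
      t = sInf {s | ∃ x₂ x₃, x₂ + P *ᵥ x₃ = v ∧
        s = (x₂ + (R₁ᵀ * A * P) *ᵥ x₃) ⬝ᵥ (Rbar⁻¹ *ᵥ (x₂ + (R₁ᵀ * A * P) *ᵥ x₃))
          + x₃ ⬝ᵥ (Bbar₂⁻¹ *ᵥ x₃)}}
    c₀ ≤ 1 + χ₁ :=
  stmt12_general A hA R₁ hR P B₂ hB₂
end

section
/- (Approximation property, Lemma 6.5.) Let A ∈ ℝ^{N×N} be symmetric positive definite with diagonal part D, and let {1,…,N} = F ⊔ C be a partition into fine and coarse index sets. Let W_f = span{e_i : i ∈ F}, W_c = span{e_j : j ∈ C}, let P_f be the A-orthogonal projection onto W_f, and let V_c := { (I − P_f) w : w ∈ W_c } (the range of the ideal interpolation). Let R̄ = RᵀDR be the symmetrized Gauss–Seidel smoother with R = (D+L)^{-1}, and assume there are constants C_s ≥ 1 and δ ∈ (0,1) such that (i) ⟨R̄^{-1}w, w⟩ ≤ C_s² ⟨Dw, w⟩ for all w ∈ ℝ^N, and (ii) ‖w‖²_D ≤ (1 + C_s/δ) ‖w‖²_A for all w ∈ W_f. Then for every v ∈ ℝ^N,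 the vector v₀ := (I − P_f) v belongs to V_c and satisfies ‖v₀‖_A ≤ ‖v‖_A and ‖v − v₀‖_{R̄^{-1}} ≤ C_s √(1 + C_s/δ) ‖v‖_A. -/
/-!
Write `v = Pf v + (v - Pf v)`. The two summands are `A`-orthogonal, so Pythagoras bounds both
`‖v - Pf v‖_A` and `‖Pf v‖_A` by `‖v‖_A`. Since `Pf v ∈ W_f`, the two hypotheses on the smoother
chain to `‖Pf v‖²_{R̄⁻¹} ≤ C_s² ‖Pf v‖²_D ≤ C_s² (1 + C_s/δ) ‖Pf v‖²_A`. Finally, `I - Pf`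
annihilates `W_f` (an element of `W_f` that is `A`-orthogonal to `W_f` vanishes), so
`v - Pf v = w - Pf w` for the restriction `w ∈ W_c` of `v` to the coarse indices.
-/

open Matrix

namespace Matrix

variable {ι : Type*} [Fintype ι]

lemma IsSymm.dotProduct_mulVec_comm {A : Matrix ι ι ℝ} (hA : A.IsSymm) (x y : ι → ℝ) :
    x ⬝ᵥ (A *ᵥ y) = y ⬝ᵥ (A *ᵥ x) := by
  rw [dotProduct_mulVec, ← mulVec_transpose, hA.eq, dotProduct_comm]

structure IsAOrthogonalProjection (A P : Matrix ι ι ℝ) (W : Submodule ℝ (ι → ℝ)) : Prop where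
  mulVec_mem : ∀ v, P *ᵥ v ∈ W
  sub_mulVec_orthogonal : ∀ v, ∀ w ∈ W, (v - P *ᵥ v) ⬝ᵥ (A *ᵥ w) = 0

namespace IsAOrthogonalProjection

variable {A P : Matrix ι ι ℝ} {W : Submodule ℝ (ι → ℝ)}

lemma sub_mulVec_eq_zero_of_mem (hP : IsAOrthogonalProjection A P W) (hA : A.PosDef)
    {u : ι → ℝ} (hu : u ∈ W) : u - P *ᵥ u = 0 := by
  by_contra hne
  have hpos := hA.dotProduct_mulVec_pos hne
  rw [star_trivial, hP.sub_mulVec_orthogonal u _ (W.sub_mem hu (hP.mulVec_mem u))] at hpos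
  exact hpos.false

lemma sub_mulVec_eq_of_sub_mem (hP : IsAOrthogonalProjection A P W) (hA : A.PosDef)
    {v w : ι → ℝ} (hvw : v - w ∈ W) : v - P *ᵥ v = w - P *ᵥ w := by
  have h := hP.sub_mulVec_eq_zero_of_mem hA hvw
  rw [mulVec_sub] at h
  linear_combination (norm := abel) h

lemma dotProduct_mulVec_eq_add (hP : IsAOrthogonalProjection A P W) (hA : A.IsSymm)
    (v : ι → ℝ) :
    v ⬝ᵥ (A *ᵥ v) =
      (v - P *ᵥ v) ⬝ᵥ (A *ᵥ (v - P *ᵥ v)) + (P *ᵥ v) ⬝ᵥ (A *ᵥ (P *ᵥ v)) := by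
  have horth := hP.sub_mulVec_orthogonal v _ (hP.mulVec_mem v)
  have horth' : (P *ᵥ v) ⬝ᵥ (A *ᵥ (v - P *ᵥ v)) = 0 := by
    rw [hA.dotProduct_mulVec_comm, horth]
  conv_lhs => rw [← sub_add_cancel v (P *ᵥ v)]
  rw [mulVec_add, add_dotProduct, dotProduct_add, dotProduct_add, horth, horth']
  ring

lemma dotProduct_mulVec_sub_le (hP : IsAOrthogonalProjection A P W) (hA : A.PosSemidef)
    (v : ι → ℝ) : (v - P *ᵥ v) ⬝ᵥ (A *ᵥ (v - P *ᵥ v)) ≤ v ⬝ᵥ (A *ᵥ v) := by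
  have hnonneg := hA.dotProduct_mulVec_nonneg (P *ᵥ v)
  rw [star_trivial] at hnonneg
  linarith [hP.dotProduct_mulVec_eq_add (isHermitian_iff_isSymm.mp hA.isHermitian) v]

lemma dotProduct_mulVec_le (hP : IsAOrthogonalProjection A P W) (hA : A.PosSemidef)
    (v : ι → ℝ) : (P *ᵥ v) ⬝ᵥ (A *ᵥ (P *ᵥ v)) ≤ v ⬝ᵥ (A *ᵥ v) := by
  have hnonneg := hA.dotProduct_mulVec_nonneg (v - P *ᵥ v)
  rw [star_trivial] at hnonneg
  linarith [hP.dotProduct_mulVec_eq_add (isHermitian_iff_isSymm.mp hA.isHermitian) v]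

end IsAOrthogonalProjection

end Matrix

lemma Set.indicator_mem_span_single_image {ι : Type*} [Fintype ι] [DecidableEq ι]
    (S : Set ι) (x : ι → ℝ) :
    S.indicator x ∈ Submodule.span ℝ ((fun i => Pi.single i (1 : ℝ)) '' S) := by
  rw [pi_eq_sum_univ' (S.indicator x)]
  refine Submodule.sum_mem _ fun i _ => ?_
  by_cases hi : i ∈ S
  · exact Submodule.smul_mem _ _ (Submodule.subset_span ⟨i, hi, rfl⟩)
  · simp [hi]

lemma Real.sqrt_le_mul_sqrt_mul_sqrt_of_le {x c k a : ℝ} (hc : 0 ≤ c) (hk : 0 ≤ k)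
    (hx : x ≤ c ^ 2 * (k * a)) : √x ≤ c * √k * √a := by
  calc √x ≤ √(c ^ 2 * (k * a)) := Real.sqrt_le_sqrt hx
    _ = c * √k * √a := by
      rw [Real.sqrt_mul (sq_nonneg c), Real.sqrt_mul hk, Real.sqrt_sq hc, mul_assoc]

theorem stmt15_general {N : ℕ} (A : Matrix (Fin N) (Fin N) ℝ) (hA : A.PosDef)
    (Fset Cset : Set (Fin N)) (hcover : Fset ∪ Cset = Set.univ)
    (Cs δ : ℝ) (hCs : 1 ≤ Cs) (hδ : δ ∈ Set.Ioo (0 : ℝ) 1)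
    (Pf : Matrix (Fin N) (Fin N) ℝ)
    (hPf_mem : ∀ v : Fin N → ℝ,
      Pf *ᵥ v ∈ Submodule.span ℝ ((fun i => Pi.single i (1 : ℝ)) '' Fset))
    (hPf_orth : ∀ v : Fin N → ℝ,
      ∀ w ∈ Submodule.span ℝ ((fun i => Pi.single i (1 : ℝ)) '' Fset),
        (v - Pf *ᵥ v) ⬝ᵥ (A *ᵥ w) = 0) :
    let D : Matrix (Fin N) (Fin N) ℝ := Matrix.diagonal fun i => A i i
    let L : Matrix (Fin N) (Fin N) ℝ := Matrix.of fun i j => if j < i then A i j else 0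
    let R := (D + L)⁻¹
    let Rbar := Rᵀ + R - Rᵀ * A * R
    let Wc := Submodule.span ℝ ((fun i => Pi.single i (1 : ℝ)) '' Cset)
    (∀ w : Fin N → ℝ, w ⬝ᵥ (Rbar⁻¹ *ᵥ w) ≤ Cs ^ 2 * (w ⬝ᵥ (D *ᵥ w))) →
      (∀ w ∈ Submodule.span ℝ ((fun i => Pi.single i (1 : ℝ)) '' Fset),
        w ⬝ᵥ (D *ᵥ w) ≤ (1 + Cs / δ) * (w ⬝ᵥ (A *ᵥ w))) →
      ∀ v : Fin N → ℝ,
        (∃ w ∈ Wc, v - Pf *ᵥ v = w - Pf *ᵥ w) ∧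
          Real.sqrt ((v - Pf *ᵥ v) ⬝ᵥ (A *ᵥ (v - Pf *ᵥ v))) ≤
            Real.sqrt (v ⬝ᵥ (A *ᵥ v)) ∧
          Real.sqrt ((Pf *ᵥ v) ⬝ᵥ (Rbar⁻¹ *ᵥ (Pf *ᵥ v))) ≤
            Cs * Real.sqrt (1 + Cs / δ) * Real.sqrt (v ⬝ᵥ (A *ᵥ v)) := by
  intro D L R Rbar Wc hsmooth happrox v
  have hP : IsAOrthogonalProjection A Pf _ := ⟨hPf_mem, hPf_orth⟩
  have hk : 0 ≤ 1 + Cs / δ := by have := hδ.1; positivity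
  have hfine :
      v - Cset.indicator v ∈ Submodule.span ℝ ((fun i => Pi.single i (1 : ℝ)) '' Fset) := by
    rw [← Set.indicator_compl]
    refine Submodule.span_mono (Set.image_mono ?_) (Set.indicator_mem_span_single_image Csetᶜ v)
    rwa [Set.compl_subset_iff_union, Set.union_comm]
  refine ⟨⟨Cset.indicator v, Cset.indicator_mem_span_single_image v,
      hP.sub_mulVec_eq_of_sub_mem hA hfine⟩,
    Real.sqrt_le_sqrt (hP.dotProduct_mulVec_sub_le hA.posSemidef v),
    Real.sqrt_le_mul_sqrt_mul_sqrt_of_le (zero_le_one.trans hCs) hk ?_⟩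
  calc (Pf *ᵥ v) ⬝ᵥ (Rbar⁻¹ *ᵥ (Pf *ᵥ v))
      ≤ Cs ^ 2 * ((1 + Cs / δ) * ((Pf *ᵥ v) ⬝ᵥ (A *ᵥ (Pf *ᵥ v)))) := by
        grw [hsmooth, happrox _ (hPf_mem v)]
    _ ≤ Cs ^ 2 * ((1 + Cs / δ) * (v ⬝ᵥ (A *ᵥ v))) := by
        grw [hP.dotProduct_mulVec_le hA.posSemidef v]

/-- approximation property, Lemma 6.5. With `{1,…,N} = F ⊔ C`,
`W_f, W_c` the spans of the corresponding standard basis vectors, `P_f` the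
`A`-orthogonal projection onto `W_f`, `V_c = (I − P_f)W_c` the range of the ideal
interpolation, and `R̄` the symmetrized Gauss–Seidel smoother, if
`⟨R̄⁻¹w, w⟩ ≤ C_s²⟨Dw, w⟩` for all `w` and `‖w‖²_D ≤ (1 + C_s/δ)‖w‖²_A` on `W_f`,
then `v₀ = (I − P_f)v ∈ V_c`, `‖v₀‖_A ≤ ‖v‖_A` and
`‖v − v₀‖_{R̄⁻¹} ≤ C_s √(1 + C_s/δ) ‖v‖_A`. -/
theorem stmt15 {N : ℕ} (A : Matrix (Fin N) (Fin N) ℝ) (hA : A.PosDef)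
    (Fset Cset : Set (Fin N)) (hcover : Fset ∪ Cset = Set.univ)
    (hdisj : Disjoint Fset Cset)
    (Cs δ : ℝ) (hCs : 1 ≤ Cs) (hδ : δ ∈ Set.Ioo (0 : ℝ) 1)
    (Pf : Matrix (Fin N) (Fin N) ℝ)
    (hPf_mem : ∀ v : Fin N → ℝ,
      Pf *ᵥ v ∈ Submodule.span ℝ ((fun i => Pi.single i (1 : ℝ)) '' Fset))
    (hPf_orth : ∀ v : Fin N → ℝ,
      ∀ w ∈ Submodule.span ℝ ((fun i => Pi.single i (1 : ℝ)) '' Fset),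
        (v - Pf *ᵥ v) ⬝ᵥ (A *ᵥ w) = 0) :
    let D : Matrix (Fin N) (Fin N) ℝ := Matrix.diagonal fun i => A i i
    let L : Matrix (Fin N) (Fin N) ℝ := Matrix.of fun i j => if j < i then A i j else 0
    let R := (D + L)⁻¹
    let Rbar := Rᵀ + R - Rᵀ * A * R
    let Wc := Submodule.span ℝ ((fun i => Pi.single i (1 : ℝ)) '' Cset)
    (∀ w : Fin N → ℝ, w ⬝ᵥ (Rbar⁻¹ *ᵥ w) ≤ Cs ^ 2 * (w ⬝ᵥ (D *ᵥ w))) →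
      (∀ w ∈ Submodule.span ℝ ((fun i => Pi.single i (1 : ℝ)) '' Fset),
        w ⬝ᵥ (D *ᵥ w) ≤ (1 + Cs / δ) * (w ⬝ᵥ (A *ᵥ w))) →
      ∀ v : Fin N → ℝ,
        (∃ w ∈ Wc, v - Pf *ᵥ v = w - Pf *ᵥ w) ∧
          Real.sqrt ((v - Pf *ᵥ v) ⬝ᵥ (A *ᵥ (v - Pf *ᵥ v))) ≤
            Real.sqrt (v ⬝ᵥ (A *ᵥ v)) ∧
          Real.sqrt ((Pf *ᵥ v) ⬝ᵥ (Rbar⁻¹ *ᵥ (Pf *ᵥ v))) ≤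
            Cs * Real.sqrt (1 + Cs / δ) * Real.sqrt (v ⬝ᵥ (A *ᵥ v)) :=
  stmt15_general A hA Fset Cset hcover Cs δ hCs hδ Pf hPf_mem hPf_orth
end
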